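/- Let M̄ = I ×_{σ,f} M be a doubly warped space-time with metric ḡ = −f²dt² ⊕ σ²g, where h: I → ℝ is smooth and ζ is a vector field on M. Then ζ̄ = h∂_t + ζ is a Killing vector field on M̄ if and only if ḣ = −ζ(ln f) (in particular ζ(ln f) is constant on M) and ζ is a conformal vector field on M with conformal factor −2hσ̇/σ (so that hσ̇/σ is independent of t). -/

import Mathlib

noncomputable section

open scoped BigOperators

/-- The model space of an `n`-dimensional manifold (global chart). -/
abbrev E (n : ℕ) := Fin n → ℝ

section Core
variable {α : Type*} [NormedAddCommGroup α] [NormedSpace ℝ α]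

/-- Directional derivative `X(φ)` of a scalar function along a vector field. -/
def dd (X : α → α) (φ : α → ℝ) (p : α) : ℝ := fderiv ℝ φ p (X p)

/-- Lie bracket `[X,Y]` of vector fields. -/
def br (X Y : α → α) (p : α) : α := fderiv ℝ Y p (X p) - fderiv ℝ X p (Y p)

/-- Lie derivative of a metric: `(L_ζ g)(X,Y)(p)`. -/
def lieD (g : α → α → α → ℝ) (ζ X Y : α → α) (p : α) : ℝ :=
  dd ζ (fun q => g q (X q) (Y q)) p - g p (br ζ X p) (Y p) - g p (X p) (br ζ Y p)

/-- `g` is a smooth field of symmetric bilinear forms. -/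
structure IsMetric (g : α → α → α → ℝ) : Prop where
  linL : ∀ p w, IsLinearMap ℝ (fun v => g p v w)
  linR : ∀ p v, IsLinearMap ℝ (g p v)
  symm : ∀ p v w, g p v w = g p w v
  smooth : ∀ v w, ContDiff ℝ (⊤ : ℕ∞) (fun p => g p v w)

/-- Positive definiteness (Riemannian metric). -/
def PosDef (g : α → α → α → ℝ) : Prop := ∀ p v, v ≠ 0 → 0 < g p v v

/-- `ζ` is a conformal vector field for `g` with conformal factor `ρ`. -/
def IsConformal (g : α → α → α → ℝ) (ζ : α → α) (ρ : α → ℝ) : Prop :=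
  ∀ X Y : α → α, ContDiff ℝ (⊤ : ℕ∞) X → ContDiff ℝ (⊤ : ℕ∞) Y → ∀ p,
    lieD g ζ X Y p = ρ p * g p (X p) (Y p)

/-- Conformality restricted to a subset. -/
def IsConformalOn (g : α → α → α → ℝ) (ζ : α → α) (ρ : α → ℝ) (S : Set α) : Prop :=
  ∀ X Y : α → α, ContDiff ℝ (⊤ : ℕ∞) X → ContDiff ℝ (⊤ : ℕ∞) Y → ∀ p ∈ S,
    lieD g ζ X Y p = ρ p * g p (X p) (Y p)

/-- `ζ` is a Killing vector field for `g`. -/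
def IsKilling (g : α → α → α → ℝ) (ζ : α → α) : Prop := IsConformal g ζ (fun _ => 0)

/-- Koszul characterization of the Levi-Civita connection of `g`. -/
def IsLC (g : α → α → α → ℝ) (D : (α → α) → (α → α) → (α → α)) : Prop :=
  ∀ X Y Z : α → α, ContDiff ℝ (⊤ : ℕ∞) X → ContDiff ℝ (⊤ : ℕ∞) Y → ContDiff ℝ (⊤ : ℕ∞) Z → ∀ p,
    2 * g p (D X Y p) (Z p) =
      dd X (fun q => g q (Y q) (Z q)) p + dd Y (fun q => g q (X q) (Z q)) p
        - dd Z (fun q => g q (X q) (Y q)) p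
        + g p (br X Y p) (Z p) - g p (br X Z p) (Y p) - g p (br Y Z p) (X p)

/-- Koszul characterization of the Levi-Civita connection, restricted to a subset. -/
def IsLCOn (g : α → α → α → ℝ) (D : (α → α) → (α → α) → (α → α)) (S : Set α) : Prop :=
  ∀ X Y Z : α → α, ContDiff ℝ (⊤ : ℕ∞) X → ContDiff ℝ (⊤ : ℕ∞) Y → ContDiff ℝ (⊤ : ℕ∞) Z → ∀ p ∈ S,
    2 * g p (D X Y p) (Z p) =
      dd X (fun q => g q (Y q) (Z q)) p + dd Y (fun q => g q (X q) (Z q)) p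
        - dd Z (fun q => g q (X q) (Y q)) p
        + g p (br X Y p) (Z p) - g p (br X Z p) (Y p) - g p (br Y Z p) (X p)

end Core

section ST
variable {n : ℕ}

/-- The doubly warped space-time metric `ḡ = −f²dt² ⊕ σ²g` on `I × M`. -/
def stg (g : E n → E n → E n → ℝ) (f : E n → ℝ) (σ : ℝ → ℝ) :
    (ℝ × E n) → (ℝ × E n) → (ℝ × E n) → ℝ :=
  fun p v w => -((f p.2)^2 * v.1 * w.1) + (σ p.1)^2 * g p.2 v.2 w.2

/-- Lift `h ∂ₜ` of a vector field on the base `I` to the space-time. -/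
def liftT (h : ℝ → ℝ) : (ℝ × E n) → (ℝ × E n) := fun p => (h p.1, 0)

/-- Lift of a vector field on `M` to the space-time. -/
def liftX (ζ : E n → E n) : (ℝ × E n) → (ℝ × E n) := fun p => (0, ζ p.2)

end ST


section Helpers

variable {n : ℕ} {g : E n → E n → E n → ℝ}

/-- standard basis vector -/
def ee (n : ℕ) (i : Fin n) : E n := fun j => if i = j then (1:ℝ) else 0

lemma metric_expand (hg : IsMetric g) (x v w : E n) :
    g x v w = ∑ i, ∑ j, v i * w j * g x (ee n i) (ee n j) := by
  have hv := pi_eq_sum_univ v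
  have hstep : g x v w = ∑ i, v i * g x (ee n i) w := by
    conv_lhs => rw [show g x v w = (IsLinearMap.mk' _ (hg.linL x w)) v from rfl, hv]
    rw [map_sum]
    simp [smul_eq_mul]
    rfl
  rw [hstep]
  refine Finset.sum_congr rfl fun i _ => ?_
  have : g x (ee n i) w = ∑ j, w j * g x (ee n i) (ee n j) := by
    conv_lhs => rw [show g x (ee n i) w = (IsLinearMap.mk' _ (hg.linR x (ee n i))) w from rfl,
      pi_eq_sum_univ w]
    rw [map_sum]
    simp [smul_eq_mul]
    rfl
  rw [this, Finset.mul_sum]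
  exact Finset.sum_congr rfl fun j _ => by ring

lemma gdiff (hg : IsMetric g) (v w : E n) : Differentiable ℝ (fun p => g p v w) :=
  (hg.smooth v w).differentiable (by simp)

lemma slot1_hasFDerivAt (hg : IsMetric g) (a b x : E n) :
    HasFDerivAt (fun y => g y a b)
      (∑ i, ∑ j, (a i * b j) • fderiv ℝ (fun y => g y (ee n i) (ee n j)) x) x := by
  have hfun : (fun y => g y a b) = fun y => ∑ i, ∑ j, a i * b j * g y (ee n i) (ee n j) :=
    funext fun y => metric_expand hg y a b
  rw [hfun]
  refine HasFDerivAt.fun_sum fun i _ => ?_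
  refine HasFDerivAt.fun_sum fun j _ => ?_
  exact ((gdiff hg (ee n i) (ee n j) x).hasFDerivAt).const_mul _

lemma slot1_fderiv_apply (hg : IsMetric g) (a b x : E n) (u : E n) :
    fderiv ℝ (fun y => g y a b) x u =
      ∑ i, ∑ j, a i * b j * fderiv ℝ (fun y => g y (ee n i) (ee n j)) x u := by
  rw [(slot1_hasFDerivAt hg a b x).fderiv]
  simp [smul_eq_mul, mul_assoc]

variable {β : Type*} [NormedAddCommGroup β] [NormedSpace ℝ β]

lemma keyD (hg : IsMetric g) (π : β →L[ℝ] E n) (X Y : β → E n) (p : β)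
    (hX : DifferentiableAt ℝ X p) (hY : DifferentiableAt ℝ Y p) :
    ∃ D : β →L[ℝ] ℝ, HasFDerivAt (fun q => g (π q) (X q) (Y q)) D p ∧
      ∀ v, D v = fderiv ℝ (fun y => g y (X p) (Y p)) (π p) (π v)
        + g (π p) (fderiv ℝ X p v) (Y p) + g (π p) (X p) (fderiv ℝ Y p v) := by
  set DX := fderiv ℝ X p with hDX
  set DY := fderiv ℝ Y p with hDY
  have hXi : ∀ i : Fin n, HasFDerivAt (fun q => X q i)
      ((ContinuousLinearMap.proj i).comp DX) p :=
    fun i => by exact (ContinuousLinearMap.proj i).hasFDerivAt.comp p hX.hasFDerivAt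
  have hYj : ∀ j : Fin n, HasFDerivAt (fun q => Y q j)
      ((ContinuousLinearMap.proj j).comp DY) p :=
    fun j => by exact (ContinuousLinearMap.proj j).hasFDerivAt.comp p hY.hasFDerivAt
  have hgij : ∀ i j : Fin n, HasFDerivAt (fun q => g (π q) (ee n i) (ee n j))
      ((fderiv ℝ (fun y => g y (ee n i) (ee n j)) (π p)).comp π) p :=
    fun i j => ((gdiff hg (ee n i) (ee n j) (π p)).hasFDerivAt).comp p π.hasFDerivAt
  refine ⟨∑ i, ∑ j,
    ((X p i * Y p j) • (fderiv ℝ (fun y => g y (ee n i) (ee n j)) (π p)).comp π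
      + (g (π p) (ee n i) (ee n j)) •
        (X p i • (ContinuousLinearMap.proj j).comp DY
          + Y p j • (ContinuousLinearMap.proj i).comp DX)), ?_, ?_⟩
  · have hfun : (fun q => g (π q) (X q) (Y q))
        = fun q => ∑ i, ∑ j, X q i * Y q j * g (π q) (ee n i) (ee n j) :=
      funext fun q => metric_expand hg (π q) (X q) (Y q)
    rw [hfun]
    refine HasFDerivAt.fun_sum fun i _ => HasFDerivAt.fun_sum fun j _ => ?_
    exact ((hXi i).mul (hYj j)).mul (hgij i j)
  · intro v
    have e1 : fderiv ℝ (fun y => g y (X p) (Y p)) (π p) (π v)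
        = ∑ i, ∑ j, X p i * Y p j * fderiv ℝ (fun y => g y (ee n i) (ee n j)) (π p) (π v) :=
      slot1_fderiv_apply hg (X p) (Y p) (π p) (π v)
    have e2 : g (π p) (DX v) (Y p)
        = ∑ i, ∑ j, (DX v) i * Y p j * g (π p) (ee n i) (ee n j) :=
      metric_expand hg (π p) (DX v) (Y p)
    have e3 : g (π p) (X p) (DY v)
        = ∑ i, ∑ j, X p i * (DY v) j * g (π p) (ee n i) (ee n j) :=
      metric_expand hg (π p) (X p) (DY v)
    rw [e1, e2, e3, ContinuousLinearMap.sum_apply]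
    rw [← Finset.sum_add_distrib, ← Finset.sum_add_distrib]
    refine Finset.sum_congr rfl fun i _ => ?_
    rw [ContinuousLinearMap.sum_apply, ← Finset.sum_add_distrib, ← Finset.sum_add_distrib]
    refine Finset.sum_congr rfl fun j _ => ?_
    simp only [ContinuousLinearMap.add_apply, ContinuousLinearMap.smul_apply,
      ContinuousLinearMap.comp_apply, ContinuousLinearMap.proj_apply, smul_eq_mul]
    ring

lemma gsubL (hg : IsMetric g) (x u w b : E n) : g x (u - w) b = g x u b - g x w b := by
  have := (IsLinearMap.mk' _ (hg.linL x b)).map_sub u w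
  simpa using this

lemma gsubR (hg : IsMetric g) (x b u w : E n) : g x b (u - w) = g x b u - g x b w := by
  have := (IsLinearMap.mk' _ (hg.linR x b)).map_sub u w
  simpa using this

lemma gzeroL (hg : IsMetric g) (x b : E n) : g x 0 b = 0 := by
  have := (IsLinearMap.mk' _ (hg.linL x b)).map_zero
  simpa using this

lemma gzeroR (hg : IsMetric g) (x b : E n) : g x b 0 = 0 := by
  have := (IsLinearMap.mk' _ (hg.linR x b)).map_zero
  simpa using this

lemma ML2 (hg : IsMetric g) (ζ X Y : E n → E n) (x : E n)
    (hζ : DifferentiableAt ℝ ζ x) (hX : DifferentiableAt ℝ X x)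
    (hY : DifferentiableAt ℝ Y x) :
    lieD g ζ X Y x = fderiv ℝ (fun y => g y (X x) (Y x)) x (ζ x)
      + g x (fderiv ℝ ζ x (X x)) (Y x) + g x (X x) (fderiv ℝ ζ x (Y x)) := by
  obtain ⟨D, hD, hDv⟩ := keyD hg (ContinuousLinearMap.id ℝ (E n)) X Y x hX hY
  have hfd : fderiv ℝ (fun q => g q (X q) (Y q)) x = D := by exact hD.fderiv
  have hv := hDv (ζ x)
  simp only [ContinuousLinearMap.coe_id', id_eq] at hv
  simp only [lieD, dd, br, hfd, hv, gsubL hg, gsubR hg]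
  ring

lemma fderiv_real (φ : ℝ → ℝ) (t s : ℝ) : fderiv ℝ φ t s = s * deriv φ t := by
  rw [← fderiv_apply_one_eq_deriv]
  conv_lhs => rw [show s = s • (1:ℝ) by simp]
  rw [(fderiv ℝ φ t).map_smul]
  simp

lemma ML {f : E n → ℝ} {σ : ℝ → ℝ} {h : ℝ → ℝ} {ζ : E n → E n}
    (hg : IsMetric g) (hf : ContDiff ℝ (⊤ : ℕ∞) f) (hσ : ContDiff ℝ (⊤ : ℕ∞) σ)
    (hh : ContDiff ℝ (⊤ : ℕ∞) h) (hζ : ContDiff ℝ (⊤ : ℕ∞) ζ)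
    (X Y : (ℝ × E n) → (ℝ × E n)) (hX : ContDiff ℝ (⊤ : ℕ∞) X) (hY : ContDiff ℝ (⊤ : ℕ∞) Y)
    (p : ℝ × E n) :
    lieD (stg g f σ) (liftT h + liftX ζ) X Y p =
      -(2 * (f p.2 * fderiv ℝ f p.2 (ζ p.2) + (f p.2)^2 * deriv h p.1)) * (X p).1 * (Y p).1
      + (σ p.1)^2 * (fderiv ℝ (fun y => g y (X p).2 (Y p).2) p.2 (ζ p.2)
          + g p.2 (fderiv ℝ ζ p.2 (X p).2) (Y p).2 + g p.2 (X p).2 (fderiv ℝ ζ p.2 (Y p).2))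
      + 2 * σ p.1 * deriv σ p.1 * h p.1 * g p.2 (X p).2 (Y p).2 := by
  set t := p.1
  set x := p.2
  set fstC := ContinuousLinearMap.fst ℝ ℝ (E n) with hfstC
  set sndC := ContinuousLinearMap.snd ℝ ℝ (E n) with hsndC
  set DX := fderiv ℝ X p with hDXdef
  set DY := fderiv ℝ Y p with hDYdef
  have hXp : DifferentiableAt ℝ X p := hX.differentiable (by simp) p
  have hYp : DifferentiableAt ℝ Y p := hY.differentiable (by simp) p
  set Z := liftT h + liftX ζ with hZdef
  have hZ : Z = fun q : ℝ × E n => (h q.1, ζ q.2) := by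
    funext q; simp [hZdef, liftT, liftX, Prod.ext_iff]
  have Dh1 : HasFDerivAt (fun q : ℝ × E n => h q.1) ((fderiv ℝ h t).comp fstC) p := by
    exact ((hh.differentiable (by simp) t).hasFDerivAt).comp p fstC.hasFDerivAt
  have Dz2 : HasFDerivAt (fun q : ℝ × E n => ζ q.2) ((fderiv ℝ ζ x).comp sndC) p := by
    exact ((hζ.differentiable (by simp) x).hasFDerivAt).comp p sndC.hasFDerivAt
  have hZd : HasFDerivAt Z (((fderiv ℝ h t).comp fstC).prod ((fderiv ℝ ζ x).comp sndC)) p := by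
    rw [hZ]; exact Dh1.prodMk Dz2
  have hZp : Z p = (h t, ζ x) := by rw [hZ]
  have hX1 : HasFDerivAt (fun q => (X q).1) (fstC.comp DX) p := by
    exact fstC.hasFDerivAt.comp p hXp.hasFDerivAt
  have hY1 : HasFDerivAt (fun q => (Y q).1) (fstC.comp DY) p := by
    exact fstC.hasFDerivAt.comp p hYp.hasFDerivAt
  have hX2 : HasFDerivAt (fun q => (X q).2) (sndC.comp DX) p := by
    exact sndC.hasFDerivAt.comp p hXp.hasFDerivAt
  have hY2 : HasFDerivAt (fun q => (Y q).2) (sndC.comp DY) p := by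
    exact sndC.hasFDerivAt.comp p hYp.hasFDerivAt
  have hfq : HasFDerivAt (fun q : ℝ × E n => f q.2) ((fderiv ℝ f x).comp sndC) p := by
    exact ((hf.differentiable (by simp) x).hasFDerivAt).comp p sndC.hasFDerivAt
  have hσq : HasFDerivAt (fun q : ℝ × E n => σ q.1) ((fderiv ℝ σ t).comp fstC) p := by
    exact ((hσ.differentiable (by simp) t).hasFDerivAt).comp p fstC.hasFDerivAt
  obtain ⟨DG, hG, hGv⟩ := keyD hg sndC (fun q => (X q).2) (fun q => (Y q).2) p
    hX2.differentiableAt hY2.differentiableAt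
  have hGv' : ∀ v : ℝ × E n, DG v =
      fderiv ℝ (fun y => g y (X p).2 (Y p).2) x v.2
        + g x ((DX v).2) (Y p).2 + g x (X p).2 ((DY v).2) := by
    intro v
    have hh' := hGv v
    rw [hX2.fderiv, hY2.fderiv] at hh'
    simpa [hsndC] using hh'
  set DA := ((f x * f x * (X p).1) • (fstC.comp DY)
      + (Y p).1 • ((f x * f x) • (fstC.comp DX)
        + (X p).1 • ((f x) • ((fderiv ℝ f x).comp sndC)
            + (f x) • ((fderiv ℝ f x).comp sndC)))) with hDAdef
  set DB := ((σ t * σ t) • DG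
      + (g x (X p).2 (Y p).2) • ((σ t) • ((fderiv ℝ σ t).comp fstC)
          + (σ t) • ((fderiv ℝ σ t).comp fstC))) with hDBdef
  have hA : HasFDerivAt (fun q : ℝ × E n => f q.2 * f q.2 * (X q).1 * (Y q).1) DA p := by
    exact ((hfq.mul hfq).mul hX1).mul hY1
  have hB : HasFDerivAt (fun q : ℝ × E n => σ q.1 * σ q.1 * g q.2 (X q).2 (Y q).2) DB p := by
    exact (hσq.mul hσq).mul hG
  have hΦeq : (fun q => stg g f σ q (X q) (Y q))
      = fun q : ℝ × E n => -(f q.2 * f q.2 * (X q).1 * (Y q).1)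
          + σ q.1 * σ q.1 * g q.2 (X q).2 (Y q).2 := by
    funext q; simp [stg]; ring
  have hΦ : HasFDerivAt (fun q => stg g f σ q (X q) (Y q)) (-DA + DB) p := by
    rw [hΦeq]; exact hA.neg.add hB
  have hdd : dd Z (fun q => stg g f σ q (X q) (Y q)) p = (-DA + DB) (Z p) := by
    rw [dd, hΦ.fderiv]
  have hbrX : br Z X p = (DX (Z p) - ((fderiv ℝ h t) (X p).1, (fderiv ℝ ζ x) (X p).2)) := by
    rw [br, hZd.fderiv, ← hDXdef]
    congr 1
  have hbrY : br Z Y p = (DY (Z p) - ((fderiv ℝ h t) (Y p).1, (fderiv ℝ ζ x) (Y p).2)) := by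
    rw [br, hZd.fderiv, ← hDYdef]
    congr 1
  rw [lieD, hdd, hbrX, hbrY]
  simp only [hZp, hDAdef, hDBdef, ContinuousLinearMap.add_apply, ContinuousLinearMap.neg_apply,
    ContinuousLinearMap.smul_apply, ContinuousLinearMap.comp_apply,
    ContinuousLinearMap.coe_fst', ContinuousLinearMap.coe_snd', smul_eq_mul, hGv']
  simp only [stg, Prod.fst_sub, Prod.snd_sub, gsubL hg, gsubR hg,
    fderiv_real h t, fderiv_real σ t, hfstC, hsndC,
    ContinuousLinearMap.coe_fst', ContinuousLinearMap.coe_snd']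
  ring

end Helpers

/-- `ζ̄ = h∂ₜ + ζ` is Killing on the doubly warped space-time iff
`ḣ = −ζ(ln f)` (with `ζ(ln f)` necessarily constant) and `ζ` is conformal on `M` with
factor `−2hσ̇/σ` (necessarily independent of `t`). -/
theorem spacetime_killing_iff {n : ℕ} (hn : 0 < n)
    (g : E n → E n → E n → ℝ) (f : E n → ℝ) (σ : ℝ → ℝ)
    (hg : IsMetric g) (hgp : PosDef g)
    (hf : ContDiff ℝ (⊤ : ℕ∞) f) (hσ : ContDiff ℝ (⊤ : ℕ∞) σ)
    (hf0 : ∀ q, 0 < f q) (hσ0 : ∀ t, 0 < σ t)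
    (h : ℝ → ℝ) (hh : ContDiff ℝ (⊤ : ℕ∞) h)
    (ζ : E n → E n) (hζ : ContDiff ℝ (⊤ : ℕ∞) ζ) :
    IsKilling (stg g f σ) (liftT h + liftX ζ) ↔
      ((∃ c : ℝ, (∀ q, dd ζ (fun r => Real.log (f r)) q = c) ∧ ∀ t, deriv h t = -c) ∧
       (∃ c' : ℝ, (∀ t, -(2 * h t * deriv σ t) / σ t = c') ∧
          IsConformal g ζ (fun _ => c'))) := by
  have hζd : Differentiable ℝ ζ := hζ.differentiable (by simp)
  have hlog : ∀ q, dd ζ (fun r => Real.log (f r)) q = (f q)⁻¹ * fderiv ℝ f q (ζ q) := by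
    intro q
    have hfd := (hf.differentiable (by simp) q).hasFDerivAt
    have hl := hfd.log (ne_of_gt (hf0 q))
    rw [dd, hl.fderiv]
    simp [smul_eq_mul]
  constructor
  · intro K
    have Kc : ∀ X Y : (ℝ × E n) → (ℝ × E n), ContDiff ℝ (⊤ : ℕ∞) X → ContDiff ℝ (⊤ : ℕ∞) Y →
        ∀ p, lieD (stg g f σ) (liftT h + liftX ζ) X Y p = 0 := by
      intro X Y hX hY p
      have := K X Y hX hY p
      simpa using this
    have hzfun : (fun y : E n => g y (0:E n) (0:E n)) = fun _ => 0 :=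
      funext fun y => gzeroL hg y 0
    have rel1 : ∀ (t : ℝ) (x : E n),
        f x * fderiv ℝ f x (ζ x) + (f x)^2 * deriv h t = 0 := by
      intro t x
      have h0 := Kc (fun _ => ((1:ℝ), (0:E n))) (fun _ => ((1:ℝ), (0:E n)))
        contDiff_const contDiff_const (t, x)
      rw [ML hg hf hσ hh hζ (fun _ => ((1:ℝ), (0:E n))) (fun _ => ((1:ℝ), (0:E n)))
        contDiff_const contDiff_const ((t : ℝ), x)] at h0
      simp only [hzfun, fderiv_const, gzeroL hg, gzeroR hg] at h0
      simp at h0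
      linarith [h0]
    have rel2 : ∀ (X Y : E n → E n), ContDiff ℝ (⊤ : ℕ∞) X → ContDiff ℝ (⊤ : ℕ∞) Y →
        ∀ (t : ℝ) (x : E n),
        (σ t)^2 * lieD g ζ X Y x + 2 * σ t * deriv σ t * h t * g x (X x) (Y x) = 0 := by
      intro X Y hX hY t x
      have hXl : ContDiff ℝ (⊤ : ℕ∞) (liftX X : (ℝ × E n) → (ℝ × E n)) :=
        contDiff_const.prodMk (hX.comp contDiff_snd)
      have hYl : ContDiff ℝ (⊤ : ℕ∞) (liftX Y : (ℝ × E n) → (ℝ × E n)) :=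
        contDiff_const.prodMk (hY.comp contDiff_snd)
      have h0 := Kc (liftX X) (liftX Y) hXl hYl (t, x)
      rw [ML hg hf hσ hh hζ (liftX X) (liftX Y) hXl hYl ((t : ℝ), x)] at h0
      simp only [liftX] at h0
      rw [← ML2 hg ζ X Y x (hζd x) (hX.differentiable (by simp) x)
        (hY.differentiable (by simp) x)] at h0
      simp only [mul_zero, zero_mul, neg_zero, zero_add] at h0
      linarith [h0]
    refine ⟨⟨-(deriv h 0), ?_, ?_⟩, ⟨-(2 * h 0 * deriv σ 0) / σ 0, ?_, ?_⟩⟩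
    · intro q
      rw [hlog q]
      have hr := rel1 0 q
      have hfne := (hf0 q).ne'
      have hdf : fderiv ℝ f q (ζ q) = -(deriv h 0) * f q := by
        have h2 : f q * (fderiv ℝ f q (ζ q) - -(deriv h 0) * f q) = 0 := by
          ring_nf
          ring_nf at hr
          linarith
        rcases mul_eq_zero.mp h2 with h3 | h3
        · exact absurd h3 hfne
        · linarith
      rw [hdf]
      field_simp
    · intro t
      have hr := rel1 t 0
      have hr0 := rel1 0 0
      have hfne := (hf0 0).ne'
      have h2 : f 0 * (f 0 * (deriv h t - deriv h 0)) = 0 := by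
        ring_nf
        ring_nf at hr hr0
        linarith
      rcases mul_eq_zero.mp h2 with h3 | h3
      · exact absurd h3 hfne
      rcases mul_eq_zero.mp h3 with h4 | h4
      · exact absurd h4 hfne
      · linarith
    · intro t
      have e0 : (ee n ⟨0, hn⟩ : E n) ≠ 0 := by
        intro hcon
        have h1 : (ee n ⟨0, hn⟩) ⟨0, hn⟩ = 1 := by simp [ee]
        rw [hcon] at h1
        simpa using h1
      have hG0 : 0 < g 0 (ee n ⟨0, hn⟩) (ee n ⟨0, hn⟩) := hgp 0 _ e0
      have hrt := rel2 (fun _ => ee n ⟨0, hn⟩) (fun _ => ee n ⟨0, hn⟩)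
        contDiff_const contDiff_const t 0
      have hr0 := rel2 (fun _ => ee n ⟨0, hn⟩) (fun _ => ee n ⟨0, hn⟩)
        contDiff_const contDiff_const 0 0
      set L := lieD g ζ (fun _ => ee n ⟨0, hn⟩) (fun _ => ee n ⟨0, hn⟩) 0 with hLdef
      set G := g 0 (ee n ⟨0, hn⟩) (ee n ⟨0, hn⟩) with hGdef
      have keyt : σ t * L = -(2 * h t * deriv σ t) * G := by
        have h2 : σ t * (σ t * L - -(2 * h t * deriv σ t) * G) = 0 := by
          ring_nf
          ring_nf at hrt
          linarith
        rcases mul_eq_zero.mp h2 with h3 | h3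
        · exact absurd h3 (hσ0 t).ne'
        · linarith
      have key0 : σ 0 * L = -(2 * h 0 * deriv σ 0) * G := by
        have h2 : σ 0 * (σ 0 * L - -(2 * h 0 * deriv σ 0) * G) = 0 := by
          ring_nf
          ring_nf at hr0
          linarith
        rcases mul_eq_zero.mp h2 with h3 | h3
        · exact absurd h3 (hσ0 0).ne'
        · linarith
      rw [div_eq_div_iff (hσ0 t).ne' (hσ0 0).ne']
      have h4 : (-(2 * h t * deriv σ t) * σ 0 - -(2 * h 0 * deriv σ 0) * σ t) * G = 0 := by
        linear_combination σ t * key0 - σ 0 * keyt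
      rcases mul_eq_zero.mp h4 with h5 | h5
      · linarith
      · exact absurd h5 hG0.ne'
    · intro X Y hX hY x
      have hr := rel2 X Y hX hY 0 x
      have hσne := (hσ0 0).ne'
      have key : σ 0 * lieD g ζ X Y x = -(2 * h 0 * deriv σ 0) * g x (X x) (Y x) := by
        have h2 : σ 0 * (σ 0 * lieD g ζ X Y x
            - -(2 * h 0 * deriv σ 0) * g x (X x) (Y x)) = 0 := by
          ring_nf
          ring_nf at hr
          linarith
        rcases mul_eq_zero.mp h2 with h3 | h3
        · exact absurd h3 hσne
        · linarith
      show lieD g ζ X Y x = -(2 * h 0 * deriv σ 0) / σ 0 * g x (X x) (Y x)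
      rw [div_mul_eq_mul_div, eq_div_iff hσne]
      linear_combination key
  · rintro ⟨⟨c, hc, hdh⟩, ⟨c', hc', hconf⟩⟩
    intro X Y hX hY p
    show lieD (stg g f σ) (liftT h + liftX ζ) X Y p = 0 * stg g f σ p (X p) (Y p)
    rw [zero_mul, ML hg hf hσ hh hζ X Y hX hY p]
    have hdf : fderiv ℝ f p.2 (ζ p.2) = f p.2 * c := by
      have h1 := hc p.2
      rw [hlog p.2] at h1
      have hfne := (hf0 p.2).ne'
      field_simp at h1
      linear_combination h1
    have hT : fderiv ℝ (fun y => g y (X p).2 (Y p).2) p.2 (ζ p.2)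
        + g p.2 (fderiv ℝ ζ p.2 (X p).2) (Y p).2
        + g p.2 (X p).2 (fderiv ℝ ζ p.2 (Y p).2)
        = c' * g p.2 (X p).2 (Y p).2 := by
      have hm := ML2 hg ζ (fun _ => (X p).2) (fun _ => (Y p).2) p.2 (hζd p.2)
        (differentiableAt_const _) (differentiableAt_const _)
      have hcnf := hconf (fun _ => (X p).2) (fun _ => (Y p).2)
        contDiff_const contDiff_const p.2
      rw [hm] at hcnf
      simpa using hcnf
    have hσc : σ p.1 * c' = -(2 * h p.1 * deriv σ p.1) := by
      have h1 := hc' p.1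
      have hσne := (hσ0 p.1).ne'
      field_simp at h1
      linear_combination -h1
    rw [hT, hdh p.1, hdf]
    linear_combination (g p.2 (X p).2 (Y p).2 * σ p.1) * hσc
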